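/- Let X be a zero-mean random vector in R^d with covariance matrix Σ satisfying the L4-L2 moment equivalence with constant κ, let p ∈ (0,1], and let Y = X ⊙ p be the p-sparsified vector. Then for every unit vector v ∈ S^{d−1}, E (vᵀ Off(Y⊗Y) v)² ≤ 4 p² κ⁴ ‖Σ‖², where ‖·‖ is the operator norm. -/

import Mathlib

open MeasureTheory ProbabilityTheory Real
open scoped ENNReal NNReal

noncomputable section

/-- The diagonal part of a matrix: off-diagonal entries set to zero. -/
def diagPart {d : ℕ} (M : Matrix (Fin d) (Fin d) ℝ) : Matrix (Fin d) (Fin d) ℝ :=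
  Matrix.of fun i j => if i = j then M i j else 0

/-- The off-diagonal part of a matrix. -/
def offPart {d : ℕ} (M : Matrix (Fin d) (Fin d) ℝ) : Matrix (Fin d) (Fin d) ℝ :=
  M - diagPart M

/-- Outer product `x xᵀ`. -/
def outer {d : ℕ} (x : Fin d → ℝ) : Matrix (Fin d) (Fin d) ℝ :=
  Matrix.of fun i j => x i * x j

/-- Bilinear form `uᵀ M w`. -/
def bilinForm {d : ℕ} (M : Matrix (Fin d) (Fin d) ℝ) (u w : Fin d → ℝ) : ℝ :=
  ∑ i, ∑ j, u i * M i j * w j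

/-- Quadratic form `vᵀ M v`. -/
def quadForm {d : ℕ} (M : Matrix (Fin d) (Fin d) ℝ) (v : Fin d → ℝ) : ℝ :=
  bilinForm M v v

/-- Operator (spectral) norm of a matrix acting on Euclidean space. -/
def opNorm {d : ℕ} (M : Matrix (Fin d) (Fin d) ℝ) : ℝ :=
  ‖LinearMap.toContinuousLinearMap (Matrix.toEuclideanLin M)‖

/-- Effective rank `tr Σ / ‖Σ‖`. -/
def effRank {d : ℕ} (S : Matrix (Fin d) (Fin d) ℝ) : ℝ :=
  S.trace / opNorm S

/-- The unit sphere `S^{d-1}` in `ℝ^d`. -/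
def unitSphere (d : ℕ) : Set (Fin d → ℝ) := {v | ∑ i, (v i) ^ 2 = 1}

/-- The truncation function: `ψ(x) = x` on `[-1,1]` and `ψ(x) = sign x` for `|x| > 1`. -/
def psi (x : ℝ) : ℝ := max (-1) (min 1 x)

variable {Ω : Type*} [MeasureSpace Ω]

/-- `X` has zero mean (coordinatewise integrable with zero integral). -/
def ZeroMean {d : ℕ} (X : Ω → Fin d → ℝ) : Prop :=
  ∀ i, Integrable (fun ω => X ω i) ∧ ∫ ω, X ω i = 0

/-- `S` is the covariance matrix of the (zero-mean) random vector `X`. -/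
def IsCov {d : ℕ} (X : Ω → Fin d → ℝ) (S : Matrix (Fin d) (Fin d) ℝ) : Prop :=
  ∀ i j, S i j = ∫ ω, X ω i * X ω j

/-- All fourth moments of the coordinates of `X` are finite. -/
def FiniteFourthMoments {d : ℕ} (X : Ω → Fin d → ℝ) : Prop :=
  ∀ i j k l : Fin d, Integrable (fun ω => X ω i * X ω j * X ω k * X ω l)

/-- The `L₄-L₂` moment equivalence (hypercontractivity) with constant `κ`:
for every unit vector `v`, `(E|⟨X,v⟩|⁴)^{1/4} ≤ κ (E|⟨X,v⟩|²)^{1/2}`. -/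
def L4L2 {d : ℕ} (X : Ω → Fin d → ℝ) (κ : ℝ) : Prop :=
  ∀ v ∈ unitSphere d,
    (∫ ω, |∑ i, X ω i * v i| ^ 4) ^ ((1 : ℝ)/4) ≤
      κ * (∫ ω, |∑ i, X ω i * v i| ^ 2) ^ ((1 : ℝ)/2)

/-- `ε : Ω → Fin d → ℝ` is a vector of i.i.d. Bernoulli(p) {0,1}-valued random variables. -/
def IsBernoulliMask {d : ℕ} (p : ℝ) (ε : Ω → Fin d → ℝ) : Prop :=
  (∀ ω i, ε ω i = 0 ∨ ε ω i = 1) ∧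
  (∀ i, Measurable fun ω => ε ω i) ∧
  (∀ i, (ℙ : Measure Ω) {ω | ε ω i = 1} = ENNReal.ofReal p) ∧
  iIndepFun (fun i ω => ε ω i) ℙ

/-- `Y = X ⊙ p`: the `p`-sparsification of `X` by the Bernoulli mask `ε`,
with `ε` independent of `X`. -/
def IsSparsified {d : ℕ} (p : ℝ) (X ε Y : Ω → Fin d → ℝ) : Prop :=
  IsBernoulliMask p ε ∧ Measurable X ∧ IndepFun X ε ∧ ∀ ω i, Y ω i = X ω i * ε ω i

/-- `Y 0, ..., Y (N-1)` are i.i.d. copies of the `p`-sparsification of `X`. -/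
def IsIIDSparsifiedSample {d N : ℕ} (p : ℝ) (X : Ω → Fin d → ℝ)
    (Y : Fin N → Ω → Fin d → ℝ) : Prop :=
  (∀ j, Measurable (Y j)) ∧
  iIndepFun Y ℙ ∧
  ∃ ε Y₀, Measurable Y₀ ∧ IsSparsified p X ε Y₀ ∧
    ∀ j, Measure.map (Y j) ℙ = Measure.map Y₀ ℙ

/-- `θ` is a Gaussian vector with mean `m` and covariance `σ2 • I` (independent
Gaussian coordinates). -/
def IsGaussianVecIndep {d : ℕ} (m : Fin d → ℝ) (σ2 : ℝ≥0) (θ : Ω → Fin d → ℝ) : Prop :=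
  (∀ i, Measurable fun ω => θ ω i) ∧
  (∀ i, Measure.map (fun ω => θ ω i) ℙ = gaussianReal (m i) σ2) ∧
  iIndepFun (fun i ω => θ ω i) ℙ

/-- `G` is a centered Gaussian vector with covariance matrix `S`: every linear marginal
`⟨G, v⟩` is a real Gaussian with mean `0` and variance `vᵀ S v`. -/
def IsCenteredGaussianVector {d : ℕ} (S : Matrix (Fin d) (Fin d) ℝ) (G : Ω → Fin d → ℝ) : Prop :=
  Measurable G ∧
  ∀ v : Fin d → ℝ, Measure.map (fun ω => ∑ i, G ω i * v i) ℙ =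
    gaussianReal 0 (quadForm S v).toNNReal

end

/-! Write `b = X ⊙ v`, so that `Z := vᵀ Off(Y⊗Y) v = ∑_{i ≠ j} b i b j ε i ε j`. The mask is
independent of `X` and idempotent, so `E[ε i ε j ε k ε l] = p ^ #{i, j, k, l}`, and averaging over
the mask first turns `E Z²` into the expectation of an explicit quartic polynomial in `b`
(`bernoulliOffDiagMoment`). By Cauchy–Schwarz and AM–GM that polynomial is dominated by
`v`-weighted fourth powers of linear forms `⟨X, u⟩` with `‖u‖ ≤ 1`, and the `L₄-L₂` equivalence
bounds each of their expectations by `κ⁴ (uᵀ Σ u)² ≤ κ⁴ ‖Σ‖²`. The coefficients add up to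
`2 p² (p + (1 - p))² = 2 p²`. -/

open Finset

theorem Finset.prod_insert_of_isIdempotentElem {α M : Type*} [DecidableEq α] [CommMonoid M]
    {f : α → M} {a : α} (s : Finset α) (ha : IsIdempotentElem (f a)) :
    ∏ x ∈ insert a s, f x = f a * ∏ x ∈ s, f x := by
  by_cases h : a ∈ s
  · rw [Finset.insert_eq_of_mem h, ← Finset.mul_prod_erase s f h, ← mul_assoc, ha.eq]
  · exact Finset.prod_insert h

theorem sum_sum_ite_eq_sub_diag {ι : Type*} [Fintype ι] [DecidableEq ι] (f : ι → ι → ℝ) :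
    ∑ i, ∑ j, (if i = j then 0 else f i j) = ∑ i, ∑ j, f i j - ∑ i, f i i := by
  rw [← Finset.sum_sub_distrib]
  refine Finset.sum_congr rfl fun i _ => ?_
  have h : ∀ j, (if i = j then 0 else f i j) = f i j - if i = j then f i j else 0 := by
    intro j; split_ifs <;> simp
  simp only [h, Finset.sum_sub_distrib, Finset.sum_ite_eq, Finset.mem_univ, if_true]

theorem sum_ite_eq_or_eq {ι : Type*} [Fintype ι] [DecidableEq ι] {i j : ι} (hij : i ≠ j)
    (c : ℝ) (g : ι → ℝ) :
    ∑ k, (if k = i ∨ k = j then g k else c * g k) = c * ∑ k, g k + (1 - c) * (g i + g j) := by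
  have h : ∀ k, (if k = i ∨ k = j then g k else c * g k)
      = c * g k + (1 - c) * ((if k = i then g k else 0) + if k = j then g k else 0) := by
    intro k
    by_cases hi : k = i
    · subst hi; simp [hij]; ring
    · by_cases hj : k = j
      · subst hj; simp [Ne.symm hij]; ring
      · simp [hi, hj]
  simp only [h, Finset.sum_add_distrib, ← Finset.mul_sum, Finset.sum_ite_eq', Finset.mem_univ,
    if_true]

theorem pow_card_insert_insert_pair {ι : Type*} [DecidableEq ι] (p : ℝ) {i j k l : ι}
    (hij : i ≠ j) (hkl : k ≠ l) :
    p ^ #(insert k (insert l {i, j}))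
      = p ^ 2 * (if k = i ∨ k = j then 1 else p) * (if l = i ∨ l = j then 1 else p) := by
  simp only [card_insert_eq_ite, mem_insert, mem_singleton, card_pair hij, hkl, false_or]
  split_ifs <;> ring

theorem sum_sum_ite_mul_pow_card {ι : Type*} [Fintype ι] [DecidableEq ι] (p : ℝ) (b : ι → ℝ)
    {i j : ι} (hij : i ≠ j) :
    ∑ k, ∑ l, (if k = l then 0 else b k * b l * p ^ #(insert k (insert l {i, j})))
      = p ^ 2 * ((p * ∑ k, b k + (1 - p) * (b i + b j)) ^ 2
        - (p ^ 2 * ∑ k, b k ^ 2 + (1 - p ^ 2) * (b i ^ 2 + b j ^ 2))) := by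
  set c : ι → ℝ := fun k => if k = i ∨ k = j then 1 else p
  have h : ∀ k l, (if k = l then 0 else b k * b l * p ^ #(insert k (insert l {i, j})))
      = if k = l then 0 else p ^ 2 * (c k * b k * (c l * b l)) := by
    intro k l
    split_ifs with hkl
    · rfl
    · rw [pow_card_insert_insert_pair p hij hkl]; ring
  have hlin : ∑ k, c k * b k = p * ∑ k, b k + (1 - p) * (b i + b j) := by
    rw [← sum_ite_eq_or_eq hij]; simp only [c]; congr 1; ext k; split_ifs <;> ring
  have hsq : ∑ k, c k * b k * (c k * b k)
      = p ^ 2 * ∑ k, b k ^ 2 + (1 - p ^ 2) * (b i ^ 2 + b j ^ 2) := by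
    rw [← sum_ite_eq_or_eq hij]; simp only [c]; congr 1; ext k; split_ifs <;> ring
  simp only [h, sum_sum_ite_eq_sub_diag, ← Finset.mul_sum, ← Finset.sum_mul, hlin, hsq]
  ring

section BernoulliOffDiagMoment

variable {ι : Type*} [Fintype ι]

/-- `E (∑_{i ≠ j} b i b j ε i ε j)²` for i.i.d. Bernoulli(p) `ε`, grouped along the Hoeffding
decomposition in `ε - p` (constant, linear and quadratic chaos). -/
def bernoulliOffDiagMoment (p : ℝ) (b : ι → ℝ) : ℝ :=
  p ^ 4 * ((∑ i, b i) ^ 2 - ∑ i, b i ^ 2) ^ 2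
    + 4 * p ^ 3 * (1 - p) * ∑ i, b i ^ 2 * (∑ j, b j - b i) ^ 2
    + 2 * p ^ 2 * (1 - p) ^ 2 * ((∑ i, b i ^ 2) ^ 2 - ∑ i, b i ^ 4)

theorem sum_ite_mul_pow_card_eq_bernoulliOffDiagMoment [DecidableEq ι] (p : ℝ) (b : ι → ℝ) :
    ∑ i, ∑ j, ∑ k, ∑ l, (if i = j ∨ k = l then 0 else b i * b j * (b k * b l))
        * p ^ #(insert k (insert l {i, j}))
      = bernoulliOffDiagMoment p b := by
  have hrow : ∀ i j, ∑ k, ∑ l, (if i = j ∨ k = l then 0 else b i * b j * (b k * b l))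
        * p ^ #(insert k (insert l {i, j}))
      = if i = j then 0 else p ^ 2 * (b i * b j) * ((p * ∑ k, b k + (1 - p) * (b i + b j)) ^ 2
        - (p ^ 2 * ∑ k, b k ^ 2 + (1 - p ^ 2) * (b i ^ 2 + b j ^ 2))) := by
    intro i j
    split_ifs with hij
    · simp [hij]
    · rw [mul_comm (p ^ 2), mul_assoc, ← sum_sum_ite_mul_pow_card p b hij, Finset.mul_sum]
      refine Finset.sum_congr rfl fun k _ => ?_
      rw [Finset.mul_sum]
      refine Finset.sum_congr rfl fun l _ => ?_
      split_ifs <;> simp_all; ring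
  simp only [hrow, sum_sum_ite_eq_sub_diag, bernoulliOffDiagMoment]
  -- after expanding, pulling the constants out of the sums leaves an identity between
  -- polynomials in the power sums `∑ i, b i ^ r`
  ring_nf
  simp only [Finset.sum_add_distrib, Finset.sum_sub_distrib, ← Finset.sum_mul, ← Finset.mul_sum,
    Finset.sum_neg_distrib]
  ring

theorem bernoulliOffDiagMoment_nonneg {p : ℝ} (hp₀ : 0 ≤ p) (hp₁ : p ≤ 1) (b : ι → ℝ) :
    0 ≤ bernoulliOffDiagMoment p b := by
  have h4 : ∑ i, b i ^ 4 ≤ (∑ i, b i ^ 2) ^ 2 := by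
    simpa only [← pow_mul] using sum_sq_le_sq_sum_of_nonneg (s := univ) fun i _ => sq_nonneg (b i)
  have hq : 0 ≤ 1 - p := by linarith
  unfold bernoulliOffDiagMoment
  have := sub_nonneg.2 h4
  positivity

theorem bernoulliOffDiagMoment_le {p : ℝ} (hp₀ : 0 ≤ p) (hp₁ : p ≤ 1) (x v : ι → ℝ)
    (hv : ∑ i, v i ^ 2 = 1) :
    bernoulliOffDiagMoment p (fun i => x i * v i)
      ≤ p ^ 4 * (x ⬝ᵥ v) ^ 4
        + (p ^ 4 + 2 * p ^ 3 * (1 - p) + 2 * p ^ 2 * (1 - p) ^ 2) * ∑ m, v m ^ 2 * x m ^ 4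
        + 2 * p ^ 3 * (1 - p) * ∑ m, v m ^ 2 * (x ⬝ᵥ v - x m * v m) ^ 4 := by
  set W := x ⬝ᵥ v
  set S₂ := ∑ i, (x i * v i) ^ 2
  have hW : ∑ i, x i * v i = W := rfl
  have hS₄ : 0 ≤ ∑ i, (x i * v i) ^ 4 := by positivity
  have hcs : S₂ ^ 2 ≤ ∑ m, v m ^ 2 * x m ^ 4 := by
    have h := Finset.sum_mul_sq_le_sq_mul_sq univ v fun i => v i * x i ^ 2
    rw [hv, one_mul] at h
    calc S₂ ^ 2 = (∑ i, v i * (v i * x i ^ 2)) ^ 2 := by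
          congr 1; exact Finset.sum_congr rfl fun i _ => by ring
      _ ≤ ∑ i, (v i * x i ^ 2) ^ 2 := h
      _ = ∑ m, v m ^ 2 * x m ^ 4 := Finset.sum_congr rfl fun i _ => by ring
  have hdiag : (W ^ 2 - S₂) ^ 2 ≤ W ^ 4 + S₂ ^ 2 := by
    nlinarith [mul_nonneg (sq_nonneg W) (by positivity : 0 ≤ S₂)]
  have hcross : 4 * ∑ i, (x i * v i) ^ 2 * (W - x i * v i) ^ 2
      ≤ 2 * ∑ m, v m ^ 2 * x m ^ 4 + 2 * ∑ m, v m ^ 2 * (W - x m * v m) ^ 4 := by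
    rw [Finset.mul_sum, Finset.mul_sum, Finset.mul_sum, ← Finset.sum_add_distrib]
    refine Finset.sum_le_sum fun m _ => ?_
    nlinarith [mul_nonneg (sq_nonneg (v m)) (sq_nonneg (x m ^ 2 - (W - x m * v m) ^ 2))]
  have hq : 0 ≤ 1 - p := by linarith
  unfold bernoulliOffDiagMoment
  rw [hW]
  have c₁ : 0 ≤ p ^ 4 := by positivity
  have c₂ : 0 ≤ p ^ 3 * (1 - p) := by positivity
  have c₃ : 0 ≤ p ^ 2 * (1 - p) ^ 2 := by positivity
  nlinarith [mul_le_mul_of_nonneg_left hdiag c₁, mul_le_mul_of_nonneg_left hcross c₂,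
    mul_le_mul_of_nonneg_left hcs c₁, mul_le_mul_of_nonneg_left hcs c₃,
    mul_nonneg c₃ hS₄]

end BernoulliOffDiagMoment

theorem quadForm_le_opNorm_mul {d : ℕ} (S : Matrix (Fin d) (Fin d) ℝ) (u : Fin d → ℝ) :
    quadForm S u ≤ opNorm S * ∑ i, u i ^ 2 := by
  set T := LinearMap.toContinuousLinearMap (Matrix.toEuclideanLin S)
  set u' : EuclideanSpace ℝ (Fin d) := WithLp.toLp 2 u
  have hquad : quadForm S u = inner ℝ u' (T u') := by
    simp only [T, u', quadForm, bilinForm, LinearMap.coe_toContinuousLinearMap',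
      Matrix.toLpLin_apply, PiLp.inner_apply, RCLike.inner_apply, conj_trivial, Matrix.mulVec,
      dotProduct, Finset.sum_mul]
    exact Finset.sum_congr rfl fun i _ => Finset.sum_congr rfl fun j _ => by ring
  have hnorm : ‖u'‖ ^ 2 = ∑ i, u i ^ 2 := by
    simp [u', EuclideanSpace.norm_eq, Real.sq_sqrt (by positivity : (0:ℝ) ≤ ∑ i, u i ^ 2)]
  calc quadForm S u ≤ ‖u'‖ * ‖T u'‖ := hquad ▸ real_inner_le_norm _ _
    _ ≤ ‖u'‖ * (‖T‖ * ‖u'‖) := by gcongr; exact T.le_opNorm u'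
    _ = opNorm S * ∑ i, u i ^ 2 := by rw [← hnorm]; simp only [opNorm, T]; ring

theorem quadForm_offPart_outer {d : ℕ} (y v : Fin d → ℝ) :
    quadForm (offPart (outer y)) v = ∑ i, ∑ j, if i = j then 0 else y i * v i * (y j * v j) := by
  simp only [quadForm, bilinForm, offPart, diagPart, outer, Matrix.sub_apply, Matrix.of_apply]
  refine Finset.sum_congr rfl fun i _ => Finset.sum_congr rfl fun j _ => ?_
  split_ifs <;> ring

namespace IsBernoulliMask

variable {Ω : Type*} [MeasureSpace Ω] {d : ℕ} {p : ℝ} {ε : Ω → Fin d → ℝ}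

theorem mul_mul_mul_eq_prod (hε : IsBernoulliMask p ε) (ω : Ω) (i j k l : Fin d) :
    ε ω i * ε ω j * (ε ω k * ε ω l) = ∏ m ∈ insert k (insert l {i, j}), ε ω m := by
  have hidem : ∀ m, IsIdempotentElem (ε ω m) := fun m => by
    rcases hε.1 ω m with h | h <;> simp [h, IsIdempotentElem]
  rw [prod_insert_of_isIdempotentElem _ (hidem k), prod_insert_of_isIdempotentElem _ (hidem l),
    prod_insert_of_isIdempotentElem _ (hidem i), prod_singleton]
  ring

theorem integrable_prod [IsProbabilityMeasure (ℙ : Measure Ω)] (hε : IsBernoulliMask p ε)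
    (s : Finset (Fin d)) : Integrable fun ω => ∏ m ∈ s, ε ω m := by
  refine .of_bound (Finset.aestronglyMeasurable_fun_prod s fun m _ =>
    (hε.2.1 m).aestronglyMeasurable) 1 (.of_forall fun ω => ?_)
  rw [norm_prod]
  exact Finset.prod_le_one (fun _ _ => norm_nonneg _) fun m _ => by
    rcases hε.1 ω m with h | h <;> simp [h]

theorem integral_apply (hε : IsBernoulliMask p ε) (hp : 0 ≤ p) (i : Fin d) :
    ∫ ω, ε ω i = p := by
  obtain ⟨h01, hmeas, hP, -⟩ := hε
  have hA : MeasurableSet {ω | ε ω i = 1} := hmeas i (measurableSet_singleton 1)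
  have : (fun ω => ε ω i) = {ω | ε ω i = 1}.indicator 1 := by
    ext ω; rcases h01 ω i with h | h <;> simp [h]
  rw [this, integral_indicator_one hA, measureReal_def, hP i, ENNReal.toReal_ofReal hp]

theorem integral_prod [IsProbabilityMeasure (ℙ : Measure Ω)] (hε : IsBernoulliMask p ε)
    (hp : 0 ≤ p) (s : Finset (Fin d)) : ∫ ω, ∏ m ∈ s, ε ω m = p ^ #s := by
  have h := hε.2.2.2.integral_fun_prod_comp (f := fun m x => if m ∈ s then x else 1)
    (fun m => (hε.2.1 m).aemeasurable)
    (fun m => by by_cases h : m ∈ s <;> simp only [h, if_true, if_false] <;> fun_prop)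
  simp only [Fintype.prod_ite_mem] at h
  rw [h, ← Finset.prod_const, ← Fintype.prod_ite_mem s fun _ => p]
  refine Finset.prod_congr rfl fun m _ => ?_
  split_ifs
  · exact hε.integral_apply hp m
  · simp

end IsBernoulliMask

theorem ProbabilityTheory.IndepFun.integral_sum_mul {Ω α β ι : Type*} [MeasurableSpace Ω]
    [MeasurableSpace α] [MeasurableSpace β] {μ : Measure Ω} {X : Ω → α} {ε : Ω → β}
    (h : IndepFun X ε μ) (s : Finset ι) {F : ι → α → ℝ} {G : ι → β → ℝ}
    (hF : ∀ t, Measurable (F t)) (hG : ∀ t, Measurable (G t))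
    (hFi : ∀ t, Integrable (fun ω => F t (X ω)) μ) (hGi : ∀ t, Integrable (fun ω => G t (ε ω)) μ) :
    ∫ ω, ∑ t ∈ s, F t (X ω) * G t (ε ω) ∂μ = ∫ ω, ∑ t ∈ s, F t (X ω) * ∫ ω', G t (ε ω') ∂μ ∂μ := by
  have hind : ∀ t, IndepFun (fun ω => F t (X ω)) (fun ω => G t (ε ω)) μ :=
    fun t => h.comp (hF t) (hG t)
  have hint : ∀ t, Integrable (fun ω => F t (X ω) * G t (ε ω)) μ :=
    fun t => (hind t).integrable_mul (hFi t) (hGi t)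
  rw [integral_finsetSum _ fun t _ => hint t,
    integral_finsetSum _ fun t _ => (hFi t).mul_const _]
  refine Finset.sum_congr rfl fun t _ => ?_
  rw [integral_mul_const]
  exact (hind t).integral_mul_eq_mul_integral (hFi t).1 (hGi t).1

theorem le_pow_four_of_rpow_le {a b κ : ℝ} (ha : 0 ≤ a) (hb : 0 ≤ b)
    (h : a ^ (1 / 4 : ℝ) ≤ κ * b ^ (1 / 2 : ℝ)) : a ≤ κ ^ 4 * b ^ 2 := by
  have h4 := pow_le_pow_left₀ (Real.rpow_nonneg ha _) h 4
  rwa [mul_pow, ← Real.rpow_natCast, ← Real.rpow_natCast (b ^ _), ← Real.rpow_mul ha,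
    ← Real.rpow_mul hb, show (1 / 4 : ℝ) * (4 : ℕ) = 1 by norm_num,
    show (1 / 2 : ℝ) * (4 : ℕ) = (2 : ℕ) by norm_num, Real.rpow_one, Real.rpow_natCast] at h4

section Moments

variable {Ω : Type*} [MeasureSpace Ω] {d : ℕ} {X : Ω → Fin d → ℝ}
  {S : Matrix (Fin d) (Fin d) ℝ} {κ : ℝ}

theorem L4L2.integral_pow_four_le (hL : L4L2 X κ) (u : Fin d → ℝ) :
    ∫ ω, (X ω ⬝ᵥ u) ^ 4 ≤ κ ^ 4 * (∫ ω, (X ω ⬝ᵥ u) ^ 2) ^ 2 := by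
  by_cases hu : u = 0
  · simp [hu]
  have hpos : 0 < ∑ i, u i ^ 2 := by
    obtain ⟨i, hi⟩ := Function.ne_iff.1 hu
    exact Finset.sum_pos' (fun i _ => sq_nonneg _)
      ⟨i, mem_univ i, (sq_nonneg _).lt_of_ne (pow_ne_zero 2 hi).symm⟩
  set r := Real.sqrt (∑ i, u i ^ 2)
  have hr : 0 < r := Real.sqrt_pos.2 hpos
  set v := r⁻¹ • u
  have huv : u = r • v := (smul_inv_smul₀ hr.ne' u).symm
  have hv : v ∈ unitSphere d := by
    change ∑ i, (r⁻¹ * u i) ^ 2 = 1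
    simp only [mul_pow, ← Finset.mul_sum, inv_pow, r, Real.sq_sqrt hpos.le]
    exact inv_mul_cancel₀ hpos.ne'
  have hunit := hL v hv
  simp only [Even.pow_abs (by decide : Even 4), Even.pow_abs (by decide : Even 2)] at hunit
  have h := le_pow_four_of_rpow_le (integral_nonneg fun _ => by positivity)
    (integral_nonneg fun _ => by positivity) hunit
  simp only [huv, dotProduct_smul, smul_eq_mul, mul_pow, integral_const_mul]
  change ∫ ω, (X ω ⬝ᵥ v) ^ 4 ≤ κ ^ 4 * (∫ ω, (X ω ⬝ᵥ v) ^ 2) ^ 2 at h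
  nlinarith [pow_pos hr 4]

theorem FiniteFourthMoments.memLp (hmom : FiniteFourthMoments X) (hX : Measurable X)
    (i : Fin d) : MemLp (fun ω => X ω i) 4 := by
  have hXi : AEStronglyMeasurable (fun ω => X ω i) :=
    (measurable_pi_apply i).comp hX |>.aestronglyMeasurable
  rw [← integrable_norm_rpow_iff hXi (by norm_num) (by norm_num)]
  refine (hmom i i i i).congr (.of_forall fun ω => ?_)
  simp only [Real.norm_eq_abs, ENNReal.toReal_ofNat]
  rw [show (4 : ℝ) = (4 : ℕ) by norm_num, Real.rpow_natCast, Even.pow_abs (by decide)]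
  ring

theorem FiniteFourthMoments.integrable_dotProduct_pow_four (hmom : FiniteFourthMoments X)
    (hX : Measurable X) (u : Fin d → ℝ) : Integrable fun ω => (X ω ⬝ᵥ u) ^ 4 := by
  have h : MemLp (fun ω => X ω ⬝ᵥ u) 4 :=
    memLp_finsetSum _ fun i _ => (hmom.memLp hX i).mul_const (u i)
  simpa only [Real.norm_eq_abs, Even.pow_abs (by decide : Even 4)] using
    h.integrable_norm_pow (by norm_num)

variable [IsProbabilityMeasure (ℙ : Measure Ω)]

theorem FiniteFourthMoments.integrable_mul (hmom : FiniteFourthMoments X) (hX : Measurable X)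
    (i j : Fin d) : Integrable fun ω => X ω i * X ω j := by
  have hXij : AEStronglyMeasurable (fun ω => X ω i * X ω j) :=
    (((measurable_pi_apply i).comp hX).mul ((measurable_pi_apply j).comp hX)).aestronglyMeasurable
  refine ((memLp_two_iff_integrable_sq hXij).2 ?_).integrable one_le_two
  exact (hmom i j i j).congr (.of_forall fun ω => by ring)

theorem IsCov.integral_dotProduct_sq (hcov : IsCov X S)
    (hmom : FiniteFourthMoments X) (hX : Measurable X) (u : Fin d → ℝ) :
    ∫ ω, (X ω ⬝ᵥ u) ^ 2 = quadForm S u := by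
  have h : ∀ ω, (X ω ⬝ᵥ u) ^ 2 = ∑ i, ∑ j, u i * u j * (X ω i * X ω j) := fun ω => by
    rw [sq, dotProduct, Finset.sum_mul_sum]
    exact Finset.sum_congr rfl fun i _ => Finset.sum_congr rfl fun j _ => by ring
  simp only [h, quadForm, bilinForm]
  rw [integral_finsetSum _ fun i _ => integrable_finsetSum _ fun j _ =>
    (hmom.integrable_mul hX i j).const_mul _]
  refine Finset.sum_congr rfl fun i _ => ?_
  rw [integral_finsetSum _ fun j _ => (hmom.integrable_mul hX i j).const_mul _]
  refine Finset.sum_congr rfl fun j _ => ?_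
  rw [integral_const_mul, hcov]
  ring

theorem integral_dotProduct_pow_four_le (hcov : IsCov X S) (hmom : FiniteFourthMoments X)
    (hX : Measurable X) (hL : L4L2 X κ) {u : Fin d → ℝ} (hu : ∑ i, u i ^ 2 ≤ 1) :
    ∫ ω, (X ω ⬝ᵥ u) ^ 4 ≤ κ ^ 4 * opNorm S ^ 2 := by
  have hq₀ : 0 ≤ quadForm S u :=
    hcov.integral_dotProduct_sq hmom hX u ▸ integral_nonneg fun _ => sq_nonneg _
  have hq₁ : quadForm S u ≤ opNorm S :=
    (quadForm_le_opNorm_mul S u).trans (mul_le_of_le_one_right (norm_nonneg _) hu)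
  calc ∫ ω, (X ω ⬝ᵥ u) ^ 4 ≤ κ ^ 4 * (∫ ω, (X ω ⬝ᵥ u) ^ 2) ^ 2 := hL.integral_pow_four_le u
    _ = κ ^ 4 * quadForm S u ^ 2 := by rw [hcov.integral_dotProduct_sq hmom hX]
    _ ≤ κ ^ 4 * opNorm S ^ 2 := by gcongr

theorem integral_sum_mul_dotProduct_pow_four_le (hcov : IsCov X S)
    (hmom : FiniteFourthMoments X) (hX : Measurable X) (hL : L4L2 X κ) {ι : Type*}
    (s : Finset ι) {w : ι → ℝ} (hw : ∀ m, 0 ≤ w m) {u : ι → Fin d → ℝ}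
    (hu : ∀ m, ∑ i, u m i ^ 2 ≤ 1) :
    ∫ ω, ∑ m ∈ s, w m * (X ω ⬝ᵥ u m) ^ 4 ≤ (∑ m ∈ s, w m) * (κ ^ 4 * opNorm S ^ 2) := by
  rw [integral_finsetSum _ fun m _ => (hmom.integrable_dotProduct_pow_four hX (u m)).const_mul _,
    Finset.sum_mul]
  refine Finset.sum_le_sum fun m _ => ?_
  rw [integral_const_mul]
  exact mul_le_mul_of_nonneg_left (integral_dotProduct_pow_four_le hcov hmom hX hL (hu m)) (hw m)

end Moments

section Sparsified

variable {Ω : Type*} [MeasureSpace Ω] [IsProbabilityMeasure (ℙ : Measure Ω)] {d : ℕ}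
  {X ε Y : Ω → Fin d → ℝ} {p : ℝ}

theorem IsSparsified.integral_sq_quadForm_offPart (hY : IsSparsified p X ε Y)
    (hmom : FiniteFourthMoments X) (hp : 0 ≤ p) (v : Fin d → ℝ) :
    ∫ ω, quadForm (offPart (outer (Y ω))) v ^ 2
      = ∫ ω, bernoulliOffDiagMoment p fun i => X ω i * v i := by
  obtain ⟨hε, hX, hXε, hYdef⟩ := hY
  let F : Fin d × Fin d × Fin d × Fin d → (Fin d → ℝ) → ℝ := fun ⟨i, j, k, l⟩ x =>
    if i = j ∨ k = l then 0 else x i * v i * (x j * v j) * (x k * v k * (x l * v l))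
  let s : Fin d × Fin d × Fin d × Fin d → Finset (Fin d) := fun ⟨i, j, k, l⟩ =>
    insert k (insert l {i, j})
  have hZ : ∀ ω, quadForm (offPart (outer (Y ω))) v ^ 2
      = ∑ t, F t (X ω) * ∏ m ∈ s t, ε ω m := by
    intro ω
    simp only [quadForm_offPart_outer, sq, Finset.sum_mul, Finset.mul_sum, Fintype.sum_prod_type]
    refine Finset.sum_congr rfl fun i _ => Finset.sum_congr rfl fun j _ =>
      Finset.sum_congr rfl fun k _ => Finset.sum_congr rfl fun l _ => ?_
    simp only [F, s, ← hε.mul_mul_mul_eq_prod, hYdef]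
    split_ifs <;> simp_all; ring
  have hF : ∀ t, Measurable (F t) := fun ⟨i, j, k, l⟩ => by
    by_cases h : i = j ∨ k = l <;> simp only [F, h, if_true, if_false] <;> fun_prop
  have hFi : ∀ t, Integrable fun ω => F t (X ω) := fun ⟨i, j, k, l⟩ => by
    by_cases h : i = j ∨ k = l
    · simp only [F, h, if_true]; exact integrable_zero _ _ _
    · simp only [F, h, if_false]
      exact ((hmom i j k l).const_mul (v i * v j * (v k * v l))).congr
        (.of_forall fun ω => by ring)
  simp only [hZ]
  rw [hXε.integral_sum_mul univ (G := fun t e => ∏ m ∈ s t, e m) hF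
    (fun t => by fun_prop) hFi (fun t => hε.integrable_prod (s t))]
  congr 1; ext ω
  simp only [hε.integral_prod hp, ← sum_ite_mul_pow_card_eq_bernoulliOffDiagMoment,
    Fintype.sum_prod_type, F, s]

theorem integral_bernoulliOffDiagMoment_le {S : Matrix (Fin d) (Fin d) ℝ} {κ : ℝ}
    (hcov : IsCov X S) (hmom : FiniteFourthMoments X) (hX : Measurable X) (hL : L4L2 X κ)
    (hp₀ : 0 ≤ p) (hp₁ : p ≤ 1) {v : Fin d → ℝ} (hv : v ∈ unitSphere d) :
    ∫ ω, bernoulliOffDiagMoment p (fun i => X ω i * v i)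
      ≤ 2 * p ^ 2 * (κ ^ 4 * opNorm S ^ 2) := by
  have hv : ∑ i, v i ^ 2 = 1 := hv
  let e : Fin d → Fin d → ℝ := fun m => Pi.single m 1
  let w : Fin d → Fin d → ℝ := fun m => v - Pi.single m (v m)
  have he : ∀ m, ∑ i, e m i ^ 2 ≤ 1 := fun m => by simp [e, Pi.single_apply]
  have hw : ∀ m, ∑ i, w m i ^ 2 ≤ 1 := fun m => hv ▸ Finset.sum_le_sum fun i _ => by
    by_cases h : i = m <;> simp [w, h, sq_nonneg]
  have hmaj : ∀ ω, bernoulliOffDiagMoment p (fun i => X ω i * v i)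
      ≤ p ^ 4 * (X ω ⬝ᵥ v) ^ 4
        + (p ^ 4 + 2 * p ^ 3 * (1 - p) + 2 * p ^ 2 * (1 - p) ^ 2)
          * ∑ m, v m ^ 2 * (X ω ⬝ᵥ e m) ^ 4
        + 2 * p ^ 3 * (1 - p) * ∑ m, v m ^ 2 * (X ω ⬝ᵥ w m) ^ 4 := fun ω => by
    simpa only [e, w, dotProduct_sub, dotProduct_single, mul_one] using
      bernoulliOffDiagMoment_le hp₀ hp₁ (X ω) v hv
  have hint : ∀ (c : ℝ) (u : Fin d → Fin d → ℝ),
      Integrable fun ω => c * ∑ m, v m ^ 2 * (X ω ⬝ᵥ u m) ^ 4 :=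
    fun c u => (integrable_finsetSum _ fun m _ =>
      (hmom.integrable_dotProduct_pow_four hX (u m)).const_mul _).const_mul c
  have hintA := (hmom.integrable_dotProduct_pow_four hX v).const_mul (p ^ 4)
  have hA := integral_dotProduct_pow_four_le hcov hmom hX hL hv.le
  have hE := integral_sum_mul_dotProduct_pow_four_le hcov hmom hX hL univ
    (fun m => sq_nonneg (v m)) he
  have hW := integral_sum_mul_dotProduct_pow_four_le hcov hmom hX hL univ
    (fun m => sq_nonneg (v m)) hw
  rw [hv, one_mul] at hE hW
  calc ∫ ω, bernoulliOffDiagMoment p (fun i => X ω i * v i)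
      ≤ ∫ ω, (p ^ 4 * (X ω ⬝ᵥ v) ^ 4
        + (p ^ 4 + 2 * p ^ 3 * (1 - p) + 2 * p ^ 2 * (1 - p) ^ 2)
          * ∑ m, v m ^ 2 * (X ω ⬝ᵥ e m) ^ 4
        + 2 * p ^ 3 * (1 - p) * ∑ m, v m ^ 2 * (X ω ⬝ᵥ w m) ^ 4) :=
        integral_mono_of_nonneg (.of_forall fun ω => bernoulliOffDiagMoment_nonneg hp₀ hp₁ _)
          ((hintA.add (hint _ e)).add (hint _ w)) (.of_forall hmaj)
    _ = p ^ 4 * (∫ ω, (X ω ⬝ᵥ v) ^ 4)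
        + (p ^ 4 + 2 * p ^ 3 * (1 - p) + 2 * p ^ 2 * (1 - p) ^ 2)
          * (∫ ω, ∑ m, v m ^ 2 * (X ω ⬝ᵥ e m) ^ 4)
        + 2 * p ^ 3 * (1 - p) * ∫ ω, ∑ m, v m ^ 2 * (X ω ⬝ᵥ w m) ^ 4 := by
      rw [integral_add (by exact hintA.add (hint _ e)) (hint _ w), integral_add hintA (hint _ e),
        integral_const_mul, integral_const_mul, integral_const_mul]
    _ ≤ p ^ 4 * (κ ^ 4 * opNorm S ^ 2)
        + (p ^ 4 + 2 * p ^ 3 * (1 - p) + 2 * p ^ 2 * (1 - p) ^ 2) * (κ ^ 4 * opNorm S ^ 2)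
        + 2 * p ^ 3 * (1 - p) * (κ ^ 4 * opNorm S ^ 2) := by
      have hc : 0 ≤ p ^ 3 * (1 - p) := mul_nonneg (by positivity) (by linarith)
      gcongr
    _ = 2 * p ^ 2 * (κ ^ 4 * opNorm S ^ 2) := by ring

end Sparsified

theorem statement_7_general {Ω : Type*} [MeasureSpace Ω] [IsProbabilityMeasure (ℙ : Measure Ω)]
    {d : ℕ} (X ε Y : Ω → Fin d → ℝ) (S : Matrix (Fin d) (Fin d) ℝ) (κ p : ℝ)
    (hcov : IsCov X S) (hmom : FiniteFourthMoments X)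
    (hL : L4L2 X κ) (hp : p ∈ Set.Ioc (0 : ℝ) 1)
    (hY : IsSparsified p X ε Y) :
    ∀ v ∈ unitSphere d,
      (∫ ω, (quadForm (offPart (outer (Y ω))) v) ^ 2) ≤
        4 * p ^ 2 * κ ^ 4 * (opNorm S) ^ 2 := by
  intro v hv
  rw [hY.integral_sq_quadForm_offPart hmom hp.1.le v]
  calc _ ≤ 2 * p ^ 2 * (κ ^ 4 * opNorm S ^ 2) :=
        integral_bernoulliOffDiagMoment_le hcov hmom hY.2.1 hL hp.1.le hp.2 hv
    _ ≤ 4 * p ^ 2 * κ ^ 4 * opNorm S ^ 2 := by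
      have : 0 ≤ p ^ 2 * (κ ^ 4 * opNorm S ^ 2) := by positivity
      linarith

/-- If `X` is zero-mean with covariance `Σ` satisfying `L₄-L₂` with constant `κ`,
`p ∈ (0,1]` and `Y = X ⊙ p`, then for every unit vector `v`,
`E (vᵀ Off(Y⊗Y) v)² ≤ 4 p² κ⁴ ‖Σ‖²`. -/
theorem statement_7 {Ω : Type*} [MeasureSpace Ω] [IsProbabilityMeasure (ℙ : Measure Ω)]
    {d : ℕ} (X ε Y : Ω → Fin d → ℝ) (S : Matrix (Fin d) (Fin d) ℝ) (κ p : ℝ)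
    (hmean : ZeroMean X) (hcov : IsCov X S) (hmom : FiniteFourthMoments X)
    (hκ : 1 ≤ κ) (hL : L4L2 X κ) (hp : p ∈ Set.Ioc (0 : ℝ) 1)
    (hY : IsSparsified p X ε Y) :
    ∀ v ∈ unitSphere d,
      (∫ ω, (quadForm (offPart (outer (Y ω))) v) ^ 2) ≤
        4 * p ^ 2 * κ ^ 4 * (opNorm S) ^ 2 :=
  statement_7_general X ε Y S κ p hcov hmom hL hp hY
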